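/- arXiv:1503.03820 — 6 statements merged into one kernel-verified Lean document; each statement's English description precedes it below -/
import Mathlib

section
/- For any topology T on a finite set X, the quasi-order of the quotient T/T is an equivalence relation, and x ≤_{T/T} y holds if and only if x and y lie in the same connected component of T. -/
variable {X : Type*}

/-- The specialization quasi-order of a topology: `x ≤_T y` iff every
`T`-open set containing `x` contains `y`. -/
def leT (t : TopologicalSpace X) (x y : X) : Prop :=
  ∀ U : Set X, t.IsOpen U → x ∈ U → y ∈ U

/-- The specialization equivalence `∼_T`. -/
def simT (t : TopologicalSpace X) (x y : X) : Prop :=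
  leT t x y ∧ leT t y x

/-- The topology of final segments of a relation `r`. -/
def topOfRel (r : X → X → Prop) : TopologicalSpace X where
  IsOpen U := ∀ x ∈ U, ∀ y, r x y → y ∈ U
  isOpen_univ := fun _ _ y _ => Set.mem_univ y
  isOpen_inter := fun U V hU hV x hx y hr => ⟨hU x hx.1 y hr, hV x hx.2 y hr⟩
  isOpen_sUnion := fun S hS x hx y hr => by
    obtain ⟨U, hU, hxU⟩ := hx
    exact ⟨U, hU, hS U hU x hxU y hr⟩

/-- `T'` is finer than `T`: every `T`-open set is `T'`-open. -/
def finer (t' t : TopologicalSpace X) : Prop :=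
  ∀ U : Set X, t.IsOpen U → t'.IsOpen U

/-- The quasi-order of the quotient topology `T/T'`: the transitive closure of
`x R y ↔ (x ≤_T y or y ≤_{T'} x)`. -/
def quotRel (t t' : TopologicalSpace X) : X → X → Prop :=
  Relation.ReflTransGen (fun x y => leT t x y ∨ leT t' y x)

/-- The quotient topology `T/T'`. -/
def quotTop (t t' : TopologicalSpace X) : TopologicalSpace X :=
  topOfRel (quotRel t t')

/-- Restriction (subspace topology) of `t` to a subset `Y`. -/
def restrictT (t : TopologicalSpace X) (Y : Set X) : TopologicalSpace Y :=
  t.induced Subtype.val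

/-- `T'` is `T`-admissible (`T' ⊚≺ T`). -/
def adm (t' t : TopologicalSpace X) : Prop :=
  finer t' t ∧
  (∀ Y : Set X, @IsConnected X t' Y → restrictT t' Y = restrictT t Y) ∧
  (∀ x y : X,
    (quotRel t t' x y ∧ quotRel t t' y x) ↔ (quotRel t' t' x y ∧ quotRel t' t' y x))

/-!
Each step of `quotRel t t` is a specialization in one direction or the other, and `x ⤳ y` puts
`x` and `y` in the same connected component, since the closure of a point is connected.
Conversely, a class of `quotRel t t` is closed under specialization in both directions; in a
finite (more generally Alexandrov-discrete) space such a set is clopen, so it contains the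
whole connected component of each of its points.
-/

open Relation

section

variable [t : TopologicalSpace X] {x y : X}

theorem leT_iff_specializes : leT t x y ↔ y ⤳ x :=
  specializes_iff_forall_open.symm

theorem Specializes.connectedComponent_eq (h : x ⤳ y) :
    connectedComponent x = connectedComponent y :=
  _root_.connectedComponent_eq <|
    isConnected_singleton.closure.subset_connectedComponent (subset_closure rfl)
      (specializes_iff_mem_closure.mp h)

theorem quotRel_self_equivalence : Equivalence (quotRel t t) :=
  ⟨fun _ => .refl, fun h => (ReflTransGen.stdSymm (r := SymmGen (leT t))).symm _ _ h,
    ReflTransGen.trans⟩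

theorem connectedComponent_eq_of_quotRel_self (h : quotRel t t x y) :
    connectedComponent x = connectedComponent y := by
  induction h with
  | refl => rfl
  | tail _ hstep ih =>
    rw [ih]
    rcases hstep with hle | hge
    · exact (leT_iff_specializes.mp hle).connectedComponent_eq.symm
    · exact (leT_iff_specializes.mp hge).connectedComponent_eq

theorem isClopen_setOf_quotRel_self [AlexandrovDiscrete X] (x : X) :
    IsClopen {y | quotRel t t x y} := by
  refine ⟨?_, ?_⟩
  · rw [← isOpen_compl_iff, isOpen_iff_forall_specializes]
    exact fun a b hab hb ha => hb (ha.tail (Or.inr (leT_iff_specializes.mpr hab)))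
  · rw [isOpen_iff_forall_specializes]
    exact fun a b hab hb => hb.tail (Or.inl (leT_iff_specializes.mpr hab))

end

/-- The quasi-order of T/T is an equivalence, and x ≤_{T/T} y iff x and
 lie in the same connected component of . -/
theorem quotRel_self_equivalence_connected [Finite X] (t : TopologicalSpace X) :
    Equivalence (quotRel t t) ∧
    ∀ x y : X, quotRel t t x y ↔ y ∈ @connectedComponent X t x := by
  refine ⟨quotRel_self_equivalence, fun x y => ⟨fun h => ?_, fun hy => ?_⟩⟩
  · rw [connectedComponent_eq_of_quotRel_self h]
    exact mem_connectedComponent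
  · exact (isClopen_setOf_quotRel_self x).connectedComponent_subset .refl hy
end

section
/- Taking quotients is compatible with the duality involution on finite topologies: for topologies T' ≺ T on a finite set X, one has (T/T')‾ = T̄ / T̄'. -/
variable {X : Type*}

/-- The dual topology on a finite set: open sets are the complements of open sets. -/
def dualTop [Finite X] (t : TopologicalSpace X) : TopologicalSpace X := by
  letI := t
  exact
    { IsOpen := fun U => IsOpen Uᶜ
      isOpen_univ := by simpa using isOpen_empty
      isOpen_inter := fun U V hU hV => by
        show IsOpen (U ∩ V)ᶜ
        rw [Set.compl_inter]; exact hU.union hV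
      isOpen_sUnion := fun S hS => by
        show IsOpen (⋃₀ S)ᶜ
        rw [Set.compl_sUnion]
        exact Set.Finite.isOpen_sInter (Set.toFinite _)
          (by rintro V ⟨U, hU, rfl⟩; exact hS U hU) }

lemma leT_dualTop [Finite X] (t : TopologicalSpace X) (x y : X) :
    leT (dualTop t) x y ↔ leT t y x := by
  constructor
  · intro hl U hU hy
    by_contra hx
    exact hl Uᶜ (show t.IsOpen Uᶜᶜ by rw [compl_compl]; exact hU) hx hy
  · intro hl U hU hx
    by_contra hy
    exact hl Uᶜ hU hy hx

lemma quotRel_dual [Finite X] (t t' : TopologicalSpace X) (x y : X) :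
    quotRel (dualTop t) (dualTop t') x y ↔ quotRel t t' y x := by
  have hbase : ∀ a b : X,
      (leT (dualTop t) a b ∨ leT (dualTop t') b a) ↔ (leT t b a ∨ leT t' a b) := by
    intro a b
    rw [leT_dualTop, leT_dualTop]
  have heq : (fun a b => leT (dualTop t) a b ∨ leT (dualTop t') b a)
      = Function.swap (fun a b => leT t a b ∨ leT t' b a) := by
    funext a b
    exact propext (hbase a b)
  unfold quotRel
  rw [heq]
  exact Relation.reflTransGen_swap

/-- Quotients are compatible with duality. -/
theorem dual_quotTop [Finite X] (t t' : TopologicalSpace X) (h : finer t' t) :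
    dualTop (quotTop t t') = quotTop (dualTop t) (dualTop t') := by
  ext U
  show (quotTop t t').IsOpen Uᶜ ↔ _
  constructor
  · intro hU x hx y hxy
    by_contra hy
    exact hU y hy x ((quotRel_dual t t' x y).1 hxy) hx
  · intro hU x hx y hxy hy
    exact hx (hU y hy x ((quotRel_dual t t' y x).2 hxy))
end

section
/- Let T'' ≺ T' ≺ T be three topologies on a finite set X. Then T'/T'' ≺ T/T'', and the topologies T/T' and (T/T'')/(T'/T'') on X are equal. -/
variable {X : Type*}

/-!
Both `T/T'` and `(T/T'')/(T'/T'')` are topologies of final segments of a reflexive-transitive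
closure, so it suffices to compare the closures. A `T/T''`-step is a `T/T'`-chain because
`T'' ≺ T'`, and a reversed `T'/T''`-step is a `T/T'`-chain because `T'`-steps may be read
backwards in `T/T'` while `T''`-steps are `T`-steps. Conversely every generator of `T/T'` is a
single generator of `(T/T'')/(T'/T'')`.
-/

lemma leT_of_finer {t t' : TopologicalSpace X} (h : finer t' t) {x y : X}
    (hxy : leT t' x y) : leT t x y :=
  fun U hU => hxy U (h U hU)

lemma finer_topOfRel {r s : X → X → Prop} (h : r ≤ s) : finer (topOfRel r) (topOfRel s) :=
  fun _ hU x hx y hxy => hU x hx y (h x y hxy)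

lemma leT_topOfRel_iff (r : X → X → Prop) (x y : X) :
    leT (topOfRel r) x y ↔ Relation.ReflTransGen r x y := by
  constructor
  · intro h
    exact h {z | Relation.ReflTransGen r x z} (fun _ ha _ hb => ha.tail hb) .refl
  · intro h U hU hx
    induction h with
    | refl => exact hx
    | tail _ hbc ih => exact hU _ ih _ hbc

lemma leT_quotTop_iff (t t' : TopologicalSpace X) (x y : X) :
    leT (quotTop t t') x y ↔ quotRel t t' x y := by
  rw [quotTop, leT_topOfRel_iff, quotRel, Relation.reflTransGen_eq_self]

lemma leT_quotTop_of_leT {t t' : TopologicalSpace X} {x y : X} (h : leT t x y) :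
    leT (quotTop t t') x y :=
  (leT_quotTop_iff t t' x y).mpr (.single (.inl h))

lemma quotRel_mono {t₁ t₁' t₂ t₂' : TopologicalSpace X}
    (h : leT t₂ ≤ leT t₁) (h' : leT t₂' ≤ leT t₁') : quotRel t₂ t₂' ≤ quotRel t₁ t₁' :=
  Relation.ReflTransGen.mono fun x y hxy => hxy.imp (h x y) (h' y x)

lemma finer_quotTop {t₁ t₁' t₂ t₂' : TopologicalSpace X}
    (h : finer t₂ t₁) (h' : finer t₂' t₁') : finer (quotTop t₂ t₂') (quotTop t₁ t₁') :=
  finer_topOfRel <| quotRel_mono (fun _ _ => leT_of_finer h) (fun _ _ => leT_of_finer h')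

lemma quotRel_swap_of_finer {t t' t'' : TopologicalSpace X} (h1 : finer t' t)
    (h2 : finer t'' t') {x y : X} (hyx : quotRel t' t'' y x) : quotRel t t' x y := by
  refine Relation.ReflTransGen.mono ?_ _ _ (Relation.ReflTransGen.swap _ _ hyx)
  rintro a b (hba | hab)
  · exact .inr hba
  · exact .inl (leT_of_finer h1 (leT_of_finer h2 hab))

lemma quotRel_quotTop_quotTop {t t' t'' : TopologicalSpace X}
    (h1 : finer t' t) (h2 : finer t'' t') :
    quotRel (quotTop t t'') (quotTop t' t'') = quotRel t t' := by
  apply le_antisymm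
  · refine Relation.ReflTransGen.lift' id ?_
    rintro a b (hab | hba)
    · exact quotRel_mono (fun _ _ => id) (fun _ _ => leT_of_finer h2)
        a b ((leT_quotTop_iff t t'' a b).mp hab)
    · exact quotRel_swap_of_finer h1 h2 ((leT_quotTop_iff t' t'' b a).mp hba)
  · exact quotRel_mono (fun _ _ => leT_quotTop_of_leT) (fun _ _ => leT_quotTop_of_leT)

theorem quot_quot_general (t t' t'' : TopologicalSpace X)
    (h1 : finer t' t) (h2 : finer t'' t') :
    finer (quotTop t' t'') (quotTop t t'') ∧
    quotTop t t' = quotTop (quotTop t t'') (quotTop t' t'') :=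
  ⟨finer_quotTop h1 fun _ hU => hU, by rw [quotTop, quotTop, quotRel_quotTop_quotTop h1 h2]⟩

/-- If T'' ≺ T' ≺ T then T'/T'' ≺ T/T'' and T/T' = (T/T'')/(T'/T''). -/
theorem quot_quot [Finite X] (t t' t'' : TopologicalSpace X)
    (h1 : finer t' t) (h2 : finer t'' t') :
    finer (quotTop t' t'') (quotTop t t'') ∧
    quotTop t t' = quotTop (quotTop t t'') (quotTop t' t'') :=
  quot_quot_general t t' t'' h1 h2
end

section
/- Let T' ≺ T be topologies on a finite set X with T' T-admissible. Then for all x,y ∈ X: x ∼_{T'} y if and only if x ∼_T y, where ∼ denotes the specialization equivalence (x ≤ y and y ≤ x). -/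
variable {X : Type*}

section Aux

lemma leT_mem_closure (t : TopologicalSpace X) {a b : X} (hab : leT t a b) :
    a ∈ @closure X t {b} := by
  letI := t
  rw [mem_closure_iff]
  intro o ho hao
  exact ⟨b, hab o ho hao, rfl⟩

lemma leT_comp_eq (t : TopologicalSpace X) {a b : X}
    (hab : leT t a b) :
    @connectedComponent X t a = @connectedComponent X t b := by
  letI := t
  have h1 : a ∈ closure {b} := leT_mem_closure t hab
  have h2 : a ∈ connectedComponent b := by
    have : closure {b} ⊆ closure (connectedComponent b) :=
      closure_mono (by simpa using mem_connectedComponent)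
    have := this h1
    rwa [isClosed_connectedComponent.closure_eq] at this
  exact (connectedComponent_eq h2).symm

lemma quotRel_comp_eq (t' : TopologicalSpace X) {a b : X}
    (hab : quotRel t' t' a b) :
    @connectedComponent X t' a = @connectedComponent X t' b := by
  induction hab with
  | refl => rfl
  | tail _ hstep ih =>
    rcases hstep with hcd | hdc
    · exact ih.trans (leT_comp_eq t' hcd)
    · exact ih.trans (leT_comp_eq t' hdc).symm

end Aux

/-- If T' ⊚≺ T then the specialization equivalences of T' and T agree. -/
theorem adm_sim_eq [Finite X] (t t' : TopologicalSpace X) (h : adm t' t) :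
    ∀ x y : X, simT t' x y ↔ simT t x y := by
  obtain ⟨hfin, hconn, hquot⟩ := h
  have hle : ∀ a b : X, leT t' a b → leT t a b :=
    fun a b hab U hU => hab U (hfin U hU)
  intro x y
  constructor
  · rintro ⟨h1, h2⟩
    exact ⟨hle x y h1, hle y x h2⟩
  · rintro ⟨h1, h2⟩
    -- x and y are quotRel-equivalent for (t, t')
    have hq : quotRel t t' x y ∧ quotRel t t' y x :=
      ⟨Relation.ReflTransGen.single (Or.inl h1),
       Relation.ReflTransGen.single (Or.inl h2)⟩
    have hq' := (hquot x y).mp hq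
    -- hence in the same t'-connected component
    have hcc : @connectedComponent X t' x = @connectedComponent X t' y :=
      quotRel_comp_eq t' hq'.1
    set Y : Set X := @connectedComponent X t' x with hY
    have hxY : x ∈ Y := @mem_connectedComponent X t' x
    have hyY : y ∈ Y := by
      rw [hY]
      rw [hY] at hcc
      rw [hcc]
      exact @mem_connectedComponent X t' y
    have hYconn : @IsConnected X t' Y := @isConnected_connectedComponent X t' x
    have heq := hconn Y hYconn
    -- transfer simT from t to subspace topology on Y
    have key : ∀ (a b : X) (ha : a ∈ Y) (hb : b ∈ Y), leT t a b → leT t' a b := by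
      intro a b ha hb hab U hU haU
      have hopen : (restrictT t Y).IsOpen (Subtype.val ⁻¹' U : Set Y) := by
        rw [← heq]
        exact (@isOpen_induced_iff Y X t' _ Subtype.val).mpr ⟨U, hU, rfl⟩
      obtain ⟨W, hW, hWeq⟩ := (@isOpen_induced_iff Y X t _ Subtype.val).mp hopen
      have haW : a ∈ W := by
        have : (⟨a, ha⟩ : Y) ∈ Subtype.val ⁻¹' W := by rw [hWeq]; exact haU
        exact this
      have hbW : b ∈ W := hab W hW haW
      have : (⟨b, hb⟩ : Y) ∈ Subtype.val ⁻¹' W := hbW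
      rw [hWeq] at this
      exact this
    exact ⟨key x y hxY hyY h1, key y x hyY hxY h2⟩
end

section
/- The admissibility relation ⊚≺ on topologies on a finite set X is transitive: if T'' ⊚≺ T' and T' ⊚≺ T, then T'' ⊚≺ T. -/
/-!
A `T''`-connected set is `T'`-connected, because `T''` and `T'` agree on it, so the restriction
condition passes from `T'' ⊚≺ T'` and `T' ⊚≺ T` to `T'' ⊚≺ T`. For the quotient condition, take a
chain of `T/T''`-steps inside a `T/T''`-class. Each `≤_T`-step `b ≤_T c` lies inside a `T/T'`-class,
hence inside a `T'/T'`-class; such a class is a zigzag of `≤_{T'}`-comparable points, hence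
`T'`-connected, so `T'` and `T` agree on it and the step is a `≤_{T'}`-step. Thus `T/T''`-classes
are `T'/T''`-classes, which are `T''/T''`-classes by `T'' ⊚≺ T'`.
-/

variable {X : Type*}

lemma finer_trans {t t' t'' : TopologicalSpace X} (h₁ : finer t'' t') (h₂ : finer t' t) :
    finer t'' t :=
  fun U hU => h₁ U (h₂ U hU)

lemma quotRel_mono_s10 {s s' t t' : TopologicalSpace X}
    (h : ∀ a b : X, leT s a b → leT t a b) (h' : ∀ a b : X, leT s' a b → leT t' a b)
    {x y : X} (hxy : quotRel s s' x y) : quotRel t t' x y :=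
  Relation.ReflTransGen.mono (fun a b hab => Or.imp (h a b) (h' b a) hab) x y hxy

lemma isConnected_pair_of_leT (t : TopologicalSpace X) {a b : X} (h : leT t a b) :
    @IsConnected X t {a, b} := by
  let _ := t
  have hb : ({a, b} : Set X) ⊆ closure {b} := by
    rintro x (rfl | rfl)
    · exact mem_closure_iff.2 fun U hU hxU => ⟨b, h U hU hxU, rfl⟩
    · exact subset_closure rfl
  exact isConnected_singleton.subset_closure (by simp) hb

lemma exists_isConnected_of_quotRel_self (t : TopologicalSpace X) {x y : X}
    (h : quotRel t t x y) : ∃ Y : Set X, @IsConnected X t Y ∧ x ∈ Y ∧ y ∈ Y := by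
  let _ := t
  induction h with
  | refl => exact ⟨{x}, isConnected_singleton, rfl, rfl⟩
  | @tail b c _ step ih =>
    obtain ⟨Y, hY, hxY, hbY⟩ := ih
    have hbc : IsConnected ({b, c} : Set X) := by
      rcases step with hbc | hcb
      · exact isConnected_pair_of_leT t hbc
      · exact Set.pair_comm c b ▸ isConnected_pair_of_leT t hcb
    exact ⟨Y ∪ {b, c}, hY.union ⟨b, hbY, by simp⟩ hbc, Or.inl hxY, Or.inr (by simp)⟩

lemma leT_of_restrictT_eq {t t' : TopologicalSpace X} {Y : Set X}
    (heq : restrictT t' Y = restrictT t Y) {x y : X} (hx : x ∈ Y) (hy : y ∈ Y)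
    (hxy : leT t x y) : leT t' x y := by
  intro U hU hxU
  have hUY : (restrictT t Y).IsOpen (Subtype.val ⁻¹' U) := heq ▸ ⟨U, hU, rfl⟩
  obtain ⟨V, hV, hVU⟩ := hUY
  have hxV : (⟨x, hx⟩ : Y) ∈ Subtype.val ⁻¹' V := hVU ▸ hxU
  have hyU : (⟨y, hy⟩ : Y) ∈ Subtype.val ⁻¹' V := hxy V hV hxV
  exact (hVU ▸ hyU :)

lemma isConnected_of_restrictT_eq {t t' : TopologicalSpace X} {Y : Set X}
    (heq : restrictT t' Y = restrictT t Y) (h : @IsConnected X t' Y) : @IsConnected X t Y := by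
  rw [@isConnected_iff_connectedSpace X t' Y] at h
  rw [@isConnected_iff_connectedSpace X t Y]
  exact (heq ▸ h : @ConnectedSpace Y (restrictT t Y))

section

variable {t t' : TopologicalSpace X}
  (hc : ∀ Y : Set X, @IsConnected X t' Y → restrictT t' Y = restrictT t Y)
  (hq : ∀ x y : X,
    (quotRel t t' x y ∧ quotRel t t' y x) ↔ (quotRel t' t' x y ∧ quotRel t' t' y x))
include hc hq

lemma leT_of_leT_of_quotRel {b c : X} (hbc : leT t b c) (hcb : quotRel t t' c b) :
    leT t' b c := by
  have hbc' : quotRel t' t' b c := ((hq b c).1 ⟨.single (Or.inl hbc), hcb⟩).1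
  obtain ⟨Y, hY, hbY, hcY⟩ := exists_isConnected_of_quotRel_self t' hbc'
  exact leT_of_restrictT_eq (hc Y hY) hbY hcY hbc

lemma quotRel_of_quotRel_of_finer {t'' : TopologicalSpace X} (hf : finer t'' t') {x y : X}
    (hxy : quotRel t t'' x y) (hyx : quotRel t t'' y x) : quotRel t' t'' x y := by
  induction hxy with
  | refl => exact .refl
  | @tail b c hxb step ih =>
    have hxb' : quotRel t' t'' x b := ih (hyx.head step)
    rcases step with hbc | hcb
    · have hcb : quotRel t t' c b :=
        quotRel_mono_s10 (fun _ _ => id) (fun _ _ => leT_of_finer hf) (hyx.trans hxb)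
      exact hxb'.tail (Or.inl (leT_of_leT_of_quotRel hc hq hbc hcb))
    · exact hxb'.tail (Or.inr hcb)

end

theorem adm_trans_general (t t' t'' : TopologicalSpace X)
    (h1 : adm t'' t') (h2 : adm t' t) :
    adm t'' t := by
  obtain ⟨f1, c1, q1⟩ := h1
  obtain ⟨f2, c2, q2⟩ := h2
  refine ⟨finer_trans f1 f2, fun Y hY => ?_, fun x y => ⟨?_, ?_⟩⟩
  · rw [c1 Y hY, c2 Y (isConnected_of_restrictT_eq (c1 Y hY) hY)]
  · rintro ⟨hxy, hyx⟩
    exact (q1 x y).1 ⟨quotRel_of_quotRel_of_finer c2 q2 f1 hxy hyx,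
      quotRel_of_quotRel_of_finer c2 q2 f1 hyx hxy⟩
  · have hmono : ∀ a b : X, quotRel t'' t'' a b → quotRel t t'' a b :=
      fun _ _ => quotRel_mono_s10 (fun _ _ => leT_of_finer (finer_trans f1 f2)) (fun _ _ => id)
    exact fun ⟨hxy, hyx⟩ => ⟨hmono _ _ hxy, hmono _ _ hyx⟩

/-- The admissibility relation  is transitive. -/
theorem adm_trans [Finite X] (t t' t'' : TopologicalSpace X)
    (h1 : adm t'' t') (h2 : adm t' t) :
    adm t'' t :=
  adm_trans_general t t' t'' h1 h2
end

section
/- Let T be a topology on a finite set X and C = (X₁,…,X_k), C' = (X_{k+1},…,X_{k+l}) set compositions such that Y := X_{k+1} ⊔ … ⊔ X_{k+l} is T-open, C is a linear extension of T|_{X\Y} and C' is a linear extension of T|_Y. Then the concatenation (X₁,…,X_{k+l}) is a linear extension of T. Conversely, for any linear extension (X₁,…,X_m) of T and 0 ≤ i ≤ m, the set X_{i+1} ⊔ … ⊔ X_m is T-open, (X₁,…,X_i) is a linear extension of T|_{X\(X_{i+1}⊔…⊔X_m)} and (X_{i+1},…,X_m) is a linear extension of T restricted to X_{i+1}⊔…⊔X_m.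 -/
variable {X : Type*}

/-- A set composition of `S`: a finite sequence of nonempty, pairwise
disjoint sets whose union is `S`. -/
def IsSetComposition (C : List (Set X)) (S : Set X) : Prop :=
  (∀ A ∈ C, A.Nonempty) ∧ C.Pairwise Disjoint ∧ ⋃₀ {A | A ∈ C} = S

/-- `C` is a linear extension of (the restriction to `S` of) the topology `t`:
strict specialization increases the block index, and equivalent points lie in
the same block. -/
def IsLinExt (t : TopologicalSpace X) (S : Set X) (C : List (Set X)) : Prop :=
  IsSetComposition C S ∧
  ∀ i j : Fin C.length, ∀ x ∈ C.get i, ∀ y ∈ C.get j,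
    ((leT t x y ∧ ¬ leT t y x) → (i : ℕ) < (j : ℕ)) ∧
    (simT t x y → (i : ℕ) = (j : ℕ))

private lemma open_of_upset [Finite X] (t : TopologicalSpace X) (Y : Set X)
    (h : ∀ x ∈ Y, ∀ y, leT t x y → y ∈ Y) : t.IsOpen Y := by
  letI := t
  have hY : Y = ⋃ x ∈ Y, ⋂₀ {U : Set X | IsOpen U ∧ x ∈ U} := by
    ext y
    simp only [Set.mem_iUnion]
    constructor
    · intro hy
      exact ⟨y, hy, fun U hU => hU.2⟩
    · rintro ⟨x, hx, hy⟩
      exact h x hx y (fun U hU hxU => hy U ⟨hU, hxU⟩)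
  rw [hY]
  exact isOpen_biUnion fun x _ =>
    Set.Finite.isOpen_sInter (Set.toFinite _) (fun U hU => hU.1)

private lemma compl_of_disjoint_union {s u : Set X} (h1 : Disjoint s u)
    (h2 : s ∪ u = Set.univ) : s = uᶜ := by
  ext x
  constructor
  · intro hx hu; exact h1.ne_of_mem hx hu rfl
  · intro hx
    rcases (Set.eq_univ_iff_forall.mp h2 x) with h | h
    · exact h
    · exact absurd h hx

/-- Concatenating a linear extension of the restriction to the complement of an
open set `Y` with a linear extension of the restriction to `Y` gives a linear
extension; conversely every linear extension splits this way at each index. -/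
theorem linExt_concat_split [Finite X] (t : TopologicalSpace X) :
    (∀ (Y : Set X) (C C' : List (Set X)), t.IsOpen Y →
        IsLinExt t Yᶜ C → IsLinExt t Y C' → IsLinExt t Set.univ (C ++ C')) ∧
    (∀ (D : List (Set X)) (i : ℕ), IsLinExt t Set.univ D → i ≤ D.length →
        t.IsOpen (⋃₀ {A | A ∈ D.drop i}) ∧
        IsLinExt t (⋃₀ {A | A ∈ D.drop i})ᶜ (D.take i) ∧
        IsLinExt t (⋃₀ {A | A ∈ D.drop i}) (D.drop i)) := by
  constructor
  · rintro Y C C' hYopen ⟨⟨hCne, hCpw, hCu⟩, hC⟩ ⟨⟨hC'ne, hC'pw, hC'u⟩, hC'⟩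
    have hsubC : ∀ A ∈ C, A ⊆ Yᶜ := fun A hA => hCu ▸ Set.subset_sUnion_of_mem hA
    have hsubC' : ∀ A ∈ C', A ⊆ Y := fun A hA => hC'u ▸ Set.subset_sUnion_of_mem hA
    refine ⟨⟨?_, ?_, ?_⟩, ?_⟩
    · intro A hA
      rcases List.mem_append.mp hA with h | h
      exacts [hCne A h, hC'ne A h]
    · rw [List.pairwise_append]
      exact ⟨hCpw, hC'pw, fun a ha b hb =>
        Set.disjoint_of_subset (hsubC a ha) (hsubC' b hb) disjoint_compl_left⟩
    · ext x
      simp only [Set.mem_sUnion, Set.mem_setOf_eq, List.mem_append, Set.mem_univ, iff_true]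
      by_cases hx : x ∈ Y
      · obtain ⟨A, hA, hxA⟩ := (hC'u.symm ▸ hx : x ∈ ⋃₀ {A | A ∈ C'})
        exact ⟨A, Or.inr hA, hxA⟩
      · obtain ⟨A, hA, hxA⟩ := (hCu.symm ▸ hx : x ∈ ⋃₀ {A | A ∈ C})
        exact ⟨A, Or.inl hA, hxA⟩
    · intro i j x hx y hy
      have hi : (i : ℕ) < C.length + C'.length := by
        have := i.2; simpa using this
      have hj : (j : ℕ) < C.length + C'.length := by
        have := j.2; simpa using this
      simp only [List.get_eq_getElem] at hx hy
      by_cases hiC : (i : ℕ) < C.length <;> by_cases hjC : (j : ℕ) < C.length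
      · rw [List.getElem_append_left hiC] at hx
        rw [List.getElem_append_left hjC] at hy
        have := hC ⟨i, hiC⟩ ⟨j, hjC⟩ x (by simpa using hx) y (by simpa using hy)
        exact this
      · -- x in left (Yᶜ), y in right (Y)
        rw [List.getElem_append_left hiC] at hx
        rw [List.getElem_append_right (le_of_not_gt hjC)] at hy
        have hxc : x ∈ Yᶜ := hsubC _ (List.getElem_mem hiC) hx
        have hyY : y ∈ Y := hsubC' _ (List.getElem_mem (by omega)) hy
        constructor
        · intro _; omega
        · intro hs
          exact absurd (hs.2 Y hYopen hyY) hxc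
      · -- x in right (Y), y in left (Yᶜ)
        rw [List.getElem_append_right (le_of_not_gt hiC)] at hx
        rw [List.getElem_append_left hjC] at hy
        have hxY : x ∈ Y := hsubC' _ (List.getElem_mem (by omega)) hx
        have hyc : y ∈ Yᶜ := hsubC _ (List.getElem_mem hjC) hy
        constructor
        · rintro ⟨hxy, _⟩
          exact absurd (hxy Y hYopen hxY) hyc
        · intro hs
          exact absurd (hs.1 Y hYopen hxY) hyc
      · rw [List.getElem_append_right (le_of_not_gt hiC)] at hx
        rw [List.getElem_append_right (le_of_not_gt hjC)] at hy
        have := hC' ⟨(i : ℕ) - C.length, by omega⟩ ⟨(j : ℕ) - C.length, by omega⟩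
          x (by simpa using hx) y (by simpa using hy)
        simp only at this
        exact ⟨fun h => by have := this.1 h; omega, fun h => by have := this.2 h; omega⟩
  · rintro D n ⟨⟨hne, hpw, hu⟩, hD⟩ hn
    set Yd := ⋃₀ {A | A ∈ D.drop n} with hYddef
    have memYd : ∀ k (hk : k < D.length), n ≤ k → ∀ x ∈ D[k], x ∈ Yd := by
      intro k hk hnk x hx
      refine ⟨D[k], ?_, hx⟩
      have h1 : k - n < (D.drop n).length := by simp; omega
      have : D[k] = (D.drop n)[k - n]'h1 := by
        rw [List.getElem_drop]
        congr 1
        omega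
      rw [this]
      exact List.getElem_mem h1
    have hblock : ∀ x : X, ∃ k, ∃ hk : k < D.length, x ∈ D[k] := by
      intro x
      obtain ⟨A, hA, hxA⟩ := (hu.symm ▸ Set.mem_univ x : x ∈ ⋃₀ {A | A ∈ D})
      obtain ⟨k, hk, rfl⟩ := List.getElem_of_mem hA
      exact ⟨k, hk, hxA⟩
    -- Yd is an up-set, hence open
    have hYdopen : t.IsOpen Yd := by
      apply open_of_upset
      rintro x ⟨A, hA, hxA⟩ y hxy
      obtain ⟨m, hm, rfl⟩ := List.getElem_of_mem hA
      have hm' : n + m < D.length := by simp at hm; omega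
      rw [List.getElem_drop] at hxA
      obtain ⟨k, hk, hyk⟩ := hblock y
      by_cases hyx : leT t y x
      · have := (hD ⟨n + m, hm'⟩ ⟨k, hk⟩ x (by simpa using hxA) y (by simpa using hyk)).2
          ⟨hxy, hyx⟩
        simp only at this
        exact memYd k hk (by omega) y hyk
      · have := (hD ⟨n + m, hm'⟩ ⟨k, hk⟩ x (by simpa using hxA) y (by simpa using hyk)).1
          ⟨hxy, hyx⟩
        simp only at this
        exact memYd k hk (by omega) y hyk
    -- take/drop unions
    have hcross : ∀ a ∈ D.take n, ∀ b ∈ D.drop n, Disjoint a b := by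
      have := hpw
      rw [← List.take_append_drop n D, List.pairwise_append] at this
      exact this.2.2
    have hdisj : Disjoint (⋃₀ {A | A ∈ D.take n}) Yd := by
      rw [Set.disjoint_sUnion_left]
      intro a ha
      rw [Set.disjoint_sUnion_right]
      intro b hb
      exact hcross a ha b hb
    have hunion : (⋃₀ {A | A ∈ D.take n}) ∪ Yd = Set.univ := by
      rw [hYddef, ← Set.sUnion_union]
      have : {A | A ∈ D.take n} ∪ {A | A ∈ D.drop n} = {A | A ∈ D} := by
        ext A
        simp only [Set.mem_union, Set.mem_setOf_eq]
        rw [← List.mem_append, List.take_append_drop]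
      rw [this, hu]
    have htu : ⋃₀ {A | A ∈ D.take n} = Ydᶜ := compl_of_disjoint_union hdisj hunion
    refine ⟨hYdopen, ⟨⟨?_, ?_, htu⟩, ?_⟩, ⟨⟨?_, ?_, rfl⟩, ?_⟩⟩
    · exact fun A hA => hne A ((List.take_sublist n D).mem hA)
    · exact hpw.sublist (List.take_sublist n D)
    · intro i j x hx y hy
      have hi : (i : ℕ) < D.length := by have := i.2; simp at this; omega
      have hj : (j : ℕ) < D.length := by have := j.2; simp at this; omega
      simp only [List.get_eq_getElem, List.getElem_take] at hx hy
      exact hD ⟨i, hi⟩ ⟨j, hj⟩ x (by simpa using hx) y (by simpa using hy)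
    · exact fun A hA => hne A ((List.drop_sublist n D).mem hA)
    · exact hpw.sublist (List.drop_sublist n D)
    · intro i j x hx y hy
      have hi : n + (i : ℕ) < D.length := by have := i.2; simp at this; omega
      have hj : n + (j : ℕ) < D.length := by have := j.2; simp at this; omega
      simp only [List.get_eq_getElem, List.getElem_drop] at hx hy
      have := hD ⟨n + i, hi⟩ ⟨n + j, hj⟩ x (by simpa using hx) y (by simpa using hy)
      simp only at this
      exact ⟨fun h => by have := this.1 h; omega, fun h => by have := this.2 h; omega⟩
end
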